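/- Let S ∈ ℝ^{m×n}, let x_0 ∈ ℝ^d, let C_S = Σ_{i=1}^d λ_i v_i v_iᵀ be an eigenvalue decomposition of C_S with orthonormal eigenvectors v_i and eigenvalues λ_i > 0, and set ξ_i = ⟨v_i, H^{1/2}(x_0 − x*)⟩. Then any sequence (x_t)_{t≥0} satisfying x_{t+1} − x_0 ∈ H_S⁻¹ · span{∇f(x_0), …, ∇f(x_t)} for all t ≥ 0 obeys, at each iteration t, δ_{x_t} ≥ (1/2) · min over real polynomials Q of degree at most t with Q(0)=1 of Σ_{i=1}^d Q(1/λ_i)² ξ_i². -/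

import Mathlib

open Matrix MeasureTheory ProbabilityTheory Real Polynomial
open scoped Classical

noncomputable section

/-- Spectral (operator) norm of a real matrix, via its action on Euclidean space. -/
def spectralNorm' {k l : ℕ} (M : Matrix (Fin k) (Fin l) ℝ) : ℝ :=
  ‖LinearMap.toContinuousLinearMap (Matrix.toEuclideanLin M)‖

/-- Positive semidefinite square root of a matrix (junk value `0` if `M` is not
positive semidefinite). -/
def msqrt {d : ℕ} (M : Matrix (Fin d) (Fin d) ℝ) : Matrix (Fin d) (Fin d) ℝ :=
  if h : M.PosSemidef then
    (h.1.eigenvectorUnitary : Matrix (Fin d) (Fin d) ℝ) *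
      diagonal (fun i => √(h.1.eigenvalues i)) *
      (star h.1.eigenvectorUnitary : Matrix (Fin d) (Fin d) ℝ)
  else 0

/-- The Hessian `H = Aᵀ A + ν² Λ`. -/
def Hmat {n d : ℕ} (A : Matrix (Fin n) (Fin d) ℝ) (ν : ℝ)
    (Λ : Matrix (Fin d) (Fin d) ℝ) : Matrix (Fin d) (Fin d) ℝ :=
  Aᵀ * A + ν ^ 2 • Λ

/-- The sketched Hessian `H_S = Aᵀ Sᵀ S A + ν² Λ`. -/
def HSmat {n d m : ℕ} (A : Matrix (Fin n) (Fin d) ℝ) (ν : ℝ)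
    (Λ : Matrix (Fin d) (Fin d) ℝ) (S : Matrix (Fin m) (Fin n) ℝ) :
    Matrix (Fin d) (Fin d) ℝ :=
  Aᵀ * Sᵀ * S * A + ν ^ 2 • Λ

/-- `C_S = H^{-1/2} H_S H^{-1/2}`. -/
def CSmat {n d m : ℕ} (A : Matrix (Fin n) (Fin d) ℝ) (ν : ℝ)
    (Λ : Matrix (Fin d) (Fin d) ℝ) (S : Matrix (Fin m) (Fin n) ℝ) :
    Matrix (Fin d) (Fin d) ℝ :=
  (msqrt (Hmat A ν Λ))⁻¹ * HSmat A ν Λ S * (msqrt (Hmat A ν Λ))⁻¹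

/-- The minimizer `x* = H⁻¹ b`. -/
def xstar {n d : ℕ} (A : Matrix (Fin n) (Fin d) ℝ) (ν : ℝ)
    (Λ : Matrix (Fin d) (Fin d) ℝ) (b : Fin d → ℝ) : Fin d → ℝ :=
  (Hmat A ν Λ)⁻¹.mulVec b

/-- The gradient `∇f(x) = H x - b`. -/
def gradf {n d : ℕ} (A : Matrix (Fin n) (Fin d) ℝ) (ν : ℝ)
    (Λ : Matrix (Fin d) (Fin d) ℝ) (b : Fin d → ℝ) (x : Fin d → ℝ) : Fin d → ℝ :=
  (Hmat A ν Λ).mulVec x - b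

/-- The exact error `δ_x = (1/2)(x - x*)ᵀ H (x - x*)`. -/
def deltaEx {n d : ℕ} (A : Matrix (Fin n) (Fin d) ℝ) (ν : ℝ)
    (Λ : Matrix (Fin d) (Fin d) ℝ) (b : Fin d → ℝ) (x : Fin d → ℝ) : ℝ :=
  (1 / 2) * ((x - xstar A ν Λ b) ⬝ᵥ (Hmat A ν Λ).mulVec (x - xstar A ν Λ b))

/-- The approximate Newton decrement `δ̃_x = (1/2) ∇f(x)ᵀ H_S⁻¹ ∇f(x)`. -/
def deltaApx {n d m : ℕ} (A : Matrix (Fin n) (Fin d) ℝ) (ν : ℝ)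
    (Λ : Matrix (Fin d) (Fin d) ℝ) (b : Fin d → ℝ)
    (S : Matrix (Fin m) (Fin n) ℝ) (x : Fin d → ℝ) : ℝ :=
  (1 / 2) * (gradf A ν Λ b x ⬝ᵥ (HSmat A ν Λ S)⁻¹.mulVec (gradf A ν Λ b x))

/-! Write `R = H^{1/2}` and `u_t = R (x_t - x*)`. Since `∇f(x_s) = H (x_s - x*) = R u_s`, the
constraint on the iterates becomes `u_{t+1} - u_0 ∈ R H_S⁻¹ R · span {u_0, …, u_t}`, and
`R H_S⁻¹ R = C_S⁻¹`. Induction on `t` gives `u_t = Q(C_S⁻¹) u_0` with `deg Q ≤ t` and `Q(0) = 1`.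
Each `v_i` is an eigenvector of `C_S⁻¹` with eigenvalue `1/λ_i`, so `⟨v_i, u_t⟩ = Q(1/λ_i) ξ_i`,
and `δ_{x_t} = ½ ‖u_t‖² = ½ Σ_i Q(1/λ_i)² ξ_i²` is one of the numbers whose infimum is taken. -/

section Orthonormal

variable {ι K : Type*} [Fintype ι] [DecidableEq ι] [Field K] {v : ι → ι → K}

theorem vecMul_sum_smul_vecMulVec (hv : ∀ i j, v i ⬝ᵥ v j = if i = j then 1 else 0)
    (c : ι → K) (i : ι) : v i ᵥ* ∑ j, c j • vecMulVec (v j) (v j) = c i • v i := by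
  simp [Matrix.vecMul_sum, Matrix.vecMul_smul, vecMul_vecMulVec, hv]

theorem sum_vecMulVec_self_eq_one (hv : ∀ i j, v i ⬝ᵥ v j = if i = j then 1 else 0) :
    ∑ i, vecMulVec (v i) (v i) = 1 := by
  have hrows : of v * (of v)ᵀ = 1 := by
    ext i j
    simpa [Matrix.mul_apply, Matrix.one_apply, dotProduct] using hv i j
  rw [← mul_eq_one_comm.mp hrows]
  ext j k
  simp [Matrix.sum_apply, vecMulVec_apply, Matrix.mul_apply]

theorem sum_sq_dotProduct_eq_dotProduct_self (hv : ∀ i j, v i ⬝ᵥ v j = if i = j then 1 else 0)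
    (w : ι → K) : ∑ i, (v i ⬝ᵥ w) ^ 2 = w ⬝ᵥ w := by
  calc ∑ i, (v i ⬝ᵥ w) ^ 2 = w ⬝ᵥ (∑ i, vecMulVec (v i) (v i)) *ᵥ w := by
        rw [Matrix.sum_mulVec, dotProduct_sum]
        refine Finset.sum_congr rfl fun i _ => ?_
        rw [vecMulVec_mulVec, op_smul_eq_smul, dotProduct_smul, smul_eq_mul, dotProduct_comm w, sq]
    _ = w ⬝ᵥ w := by rw [sum_vecMulVec_self_eq_one hv, one_mulVec]

theorem inv_sum_smul_vecMulVec (hv : ∀ i j, v i ⬝ᵥ v j = if i = j then 1 else 0)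
    {c : ι → K} (hc : ∀ i, c i ≠ 0) :
    (∑ i, c i • vecMulVec (v i) (v i))⁻¹ = ∑ i, (c i)⁻¹ • vecMulVec (v i) (v i) := by
  refine inv_eq_left_inv ?_
  simp only [Finset.sum_mul, smul_mul, vecMulVec_mul, vecMul_sum_smul_vecMulVec hv,
    vecMulVec_smul, smul_smul, inv_mul_cancel₀ (hc _), one_smul]
  exact sum_vecMulVec_self_eq_one hv

end Orthonormal

section Krylov

variable {ι K : Type*} [Fintype ι] [CommRing K]

theorem vecMul_aeval_of_vecMul_eq_smul [DecidableEq ι] {N : Matrix ι ι K} {w : ι → K} {c : K}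
    (h : w ᵥ* N = c • w) (Q : K[X]) : w ᵥ* aeval N Q = Q.eval c • w := by
  induction Q using Polynomial.induction_on with
  | C a => simp [Algebra.algebraMap_eq_smul_one, Matrix.vecMul_smul]
  | add p q hp hq => simp [Matrix.vecMul_add, add_smul, hp, hq]
  | monomial n a ih =>
    rw [pow_succ, ← mul_assoc, map_mul, aeval_X, ← Matrix.vecMul_vecMul, ih, Matrix.smul_vecMul, h,
      smul_smul, eval_mul_X]

theorem aeval_mulVecLin_apply [DecidableEq ι] (N : Matrix ι ι K) (Q : K[X]) (w : ι → K) :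
    aeval (mulVecLin N) Q w = aeval N Q *ᵥ w :=
  congrArg (· w) (aeval_algHom_apply (toLinAlgEquiv' : Matrix ι ι K ≃ₐ[K] _) N Q)

theorem exists_polynomial_of_sub_mem_map_span {M : Type*} [AddCommGroup M]
    [Module K M] (f : Module.End K M) (u : ℕ → M)
    (hu : ∀ t, u (t + 1) - u 0 ∈ (Submodule.span K {w | ∃ s ≤ t, w = u s}).map f) (t : ℕ) :
    ∃ Q : K[X], Q.natDegree ≤ t ∧ Q.eval 0 = 1 ∧ u t = aeval f Q (u 0) := by
  induction t using Nat.strong_induction_on with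
  | _ t ih =>
  rcases t with _ | t
  · exact ⟨1, by simp, by simp, by simp⟩
  set L : K[X] →ₗ[K] M := LinearMap.applyₗ (u 0) ∘ₗ (aeval f).toLinearMap
  have hspan : Submodule.span K {w | ∃ s ≤ t, w = u s} ≤ (degreeLE K t).map L := by
    rw [Submodule.span_le]
    rintro _ ⟨s, hs, rfl⟩
    obtain ⟨Q, hQ, -, hQu⟩ := ih s (Nat.lt_succ_of_le hs)
    exact ⟨Q, mem_degreeLE.2 (degree_le_natDegree.trans (by exact_mod_cast hQ.trans hs)), hQu.symm⟩
  obtain ⟨w, hw, hfw⟩ := hu t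
  obtain ⟨P, hP, rfl⟩ := hspan hw
  rw [SetLike.mem_coe, mem_degreeLE, ← natDegree_le_iff_degree_le] at hP
  refine ⟨1 + X * P, ?_, by simp, ?_⟩
  · refine (natDegree_add_le _ _).trans (max_le (by simp) ?_)
    exact natDegree_mul_le.trans (by linarith [natDegree_X_le (R := K)])
  · rw [← sub_add_cancel (u (t + 1)) (u 0), ← hfw]
    simp [L, add_comm]

theorem mulVec_sub_mem_map_span {R P : Matrix ι ι K} {y : ℕ → ι → K}
    (hy : ∀ t, y (t + 1) - y 0 ∈
      (Submodule.span K {g | ∃ s ≤ t, g = (R * R) *ᵥ y s}).map (mulVecLin P)) (t : ℕ) :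
    R *ᵥ y (t + 1) - R *ᵥ y 0 ∈
      (Submodule.span K {w | ∃ s ≤ t, w = R *ᵥ y s}).map (mulVecLin (R * P * R)) := by
  have himage : {g | ∃ s ≤ t, g = (R * R) *ᵥ y s} =
      mulVecLin R '' {w | ∃ s ≤ t, w = R *ᵥ y s} := by
    ext g
    simp [mulVec_mulVec, eq_comm]
  obtain ⟨g, hg, hPg⟩ := hy t
  rw [himage, Submodule.span_image] at hg
  obtain ⟨w, hw, rfl⟩ := hg
  refine ⟨w, hw, ?_⟩
  simp [← mulVec_sub, ← hPg, mulVec_mulVec, Matrix.mul_assoc]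

end Krylov

theorem dotProduct_mul_self_mulVec {ι K : Type*} [Fintype ι] [CommRing K] {R : Matrix ι ι K}
    (hR : Rᵀ = R) (w : ι → K) : w ⬝ᵥ (R * R) *ᵥ w = (R *ᵥ w) ⬝ᵥ (R *ᵥ w) := by
  rw [← mulVec_mulVec, dotProduct_mulVec, ← mulVec_transpose, hR]

theorem msqrt_mul_self {d : ℕ} {M : Matrix (Fin d) (Fin d) ℝ} (hM : M.PosSemidef) :
    msqrt M * msqrt M = M := by
  have hconj : msqrt M = Unitary.conjStarAlgAut ℝ _ hM.1.eigenvectorUnitary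
      (diagonal fun i => √(hM.1.eigenvalues i)) := by
    rw [msqrt, dif_pos hM]; rfl
  rw [hconj, ← map_mul, diagonal_mul_diagonal]
  conv_rhs => rw [hM.1.spectral_theorem]
  congr 2
  ext i
  simp [Real.mul_self_sqrt (hM.eigenvalues_nonneg i)]

theorem transpose_msqrt {d : ℕ} (M : Matrix (Fin d) (Fin d) ℝ) : (msqrt M)ᵀ = msqrt M := by
  unfold msqrt
  split_ifs
  · simp [Matrix.star_eq_conjTranspose, Matrix.transpose_mul, Matrix.mul_assoc]
  · simp

theorem posDef_Hmat {n d : ℕ} (A : Matrix (Fin n) (Fin d) ℝ) {ν : ℝ} (hν : ν ≠ 0)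
    {Λ : Matrix (Fin d) (Fin d) ℝ} (hΛ : (Λ - 1).PosSemidef) : (Hmat A ν Λ).PosDef := by
  have hΛpd : Λ.PosDef := by simpa using PosDef.posSemidef_add hΛ PosDef.one
  have hAA : (Aᵀ * A).PosSemidef := by
    simpa using posSemidef_conjTranspose_mul_self A
  exact PosDef.posSemidef_add hAA (hΛpd.smul (by positivity))

theorem gradf_eq_mulVec_sub_xstar {n d : ℕ} {A : Matrix (Fin n) (Fin d) ℝ} {ν : ℝ}
    {Λ : Matrix (Fin d) (Fin d) ℝ} (hH : IsUnit (Hmat A ν Λ).det) (b x : Fin d → ℝ) :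
    gradf A ν Λ b x = Hmat A ν Λ *ᵥ (x - xstar A ν Λ b) := by
  rw [gradf, xstar, mulVec_sub, mulVec_mulVec, mul_nonsing_inv _ hH, one_mulVec]

theorem stmt4_general {n d m : ℕ}
    (A : Matrix (Fin n) (Fin d) ℝ) (b : Fin d → ℝ)
    (Λ : Matrix (Fin d) (Fin d) ℝ)
    (hΛ : (Λ - 1).PosSemidef) (ν : ℝ) (hν : 0 < ν)
    (S : Matrix (Fin m) (Fin n) ℝ)
    -- eigenvalue decomposition `C_S = Σ_i λ_i v_i v_iᵀ`
    (lam : Fin d → ℝ) (v : Fin d → Fin d → ℝ)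
    (hortho : ∀ i j, v i ⬝ᵥ v j = if i = j then (1 : ℝ) else 0)
    (hpos : ∀ i, 0 < lam i)
    (hdecomp : CSmat A ν Λ S = ∑ i, lam i • Matrix.vecMulVec (v i) (v i))
    (x : ℕ → Fin d → ℝ)
    (hx : ∀ t : ℕ, x (t + 1) - x 0 ∈
      Submodule.map (Matrix.mulVecLin (HSmat A ν Λ S)⁻¹)
        (Submodule.span ℝ {g | ∃ s ≤ t, g = gradf A ν Λ b (x s)})) :
    ∀ t : ℕ,
      sInf {y : ℝ | ∃ Q : Polynomial ℝ, Q.natDegree ≤ t ∧ Q.eval 0 = 1 ∧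
          y = (1 / 2) * ∑ i, (Q.eval (lam i)⁻¹) ^ 2 *
            (v i ⬝ᵥ (msqrt (Hmat A ν Λ)).mulVec (x 0 - xstar A ν Λ b)) ^ 2}
        ≤ deltaEx A ν Λ b (x t) := by
  intro t
  have hH := posDef_Hmat A hν.ne' hΛ
  set R := msqrt (Hmat A ν Λ)
  have hRR : R * R = Hmat A ν Λ := msqrt_mul_self hH.posSemidef
  have hHdet : IsUnit (Hmat A ν Λ).det := hH.det_pos.ne'.isUnit
  have hR : IsUnit R.det := isUnit_of_mul_isUnit_left (by rwa [← det_mul, hRR])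
  have heig : ∀ i, v i ᵥ* (R * (HSmat A ν Λ S)⁻¹ * R) = (lam i)⁻¹ • v i := by
    have hC : (CSmat A ν Λ S)⁻¹ = R * (HSmat A ν Λ S)⁻¹ * R := by
      rw [CSmat, Matrix.mul_inv_rev, Matrix.mul_inv_rev, nonsing_inv_nonsing_inv _ hR,
        Matrix.mul_assoc]
    intro i
    rw [← hC, hdecomp, inv_sum_smul_vecMulVec hortho fun j => (hpos j).ne',
      vecMul_sum_smul_vecMulVec hortho]
  set y : ℕ → Fin d → ℝ := fun s => x s - xstar A ν Λ b
  have hy : ∀ t, y (t + 1) - y 0 ∈ (Submodule.span ℝ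
      {g | ∃ s ≤ t, g = (R * R) *ᵥ y s}).map (mulVecLin (HSmat A ν Λ S)⁻¹) := by
    simpa only [y, sub_sub_sub_cancel_right, hRR, gradf_eq_mulVec_sub_xstar hHdet]
      using hx
  obtain ⟨Q, hQdeg, hQ0, hQ⟩ :=
    exists_polynomial_of_sub_mem_map_span (mulVecLin (R * (HSmat A ν Λ S)⁻¹ * R))
      (fun s => R *ᵥ y s) (mulVec_sub_mem_map_span hy) t
  refine csInf_le ⟨0, ?_⟩ ⟨Q, hQdeg, hQ0, ?_⟩
  · rintro _ ⟨P, -, -, rfl⟩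
    positivity
  · rw [deltaEx, ← hRR, dotProduct_mul_self_mulVec (transpose_msqrt _),
      ← sum_sq_dotProduct_eq_dotProduct_self hortho, hQ, aeval_mulVecLin_apply]
    congr 1
    refine Finset.sum_congr rfl fun i _ => ?_
    rw [dotProduct_mulVec (v i) (aeval _ Q), vecMul_aeval_of_vecMul_eq_smul (heig i),
      smul_dotProduct, smul_eq_mul, mul_pow]

/-- Lower bound for any preconditioned first-order method:
`δ_{x_t} ≥ (1/2)·min_{Q, deg Q ≤ t, Q(0)=1} Σ_i Q(1/λ_i)² ξ_i²`. -/
theorem stmt4 {n d m : ℕ} (hd : 1 ≤ d) (hdn : d ≤ n)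
    (A : Matrix (Fin n) (Fin d) ℝ) (b : Fin d → ℝ)
    (Λ : Matrix (Fin d) (Fin d) ℝ) (hΛdiag : Λ.IsDiag)
    (hΛ : (Λ - 1).PosSemidef) (ν : ℝ) (hν : 0 < ν)
    (S : Matrix (Fin m) (Fin n) ℝ)
    -- eigenvalue decomposition `C_S = Σ_i λ_i v_i v_iᵀ`
    (lam : Fin d → ℝ) (v : Fin d → Fin d → ℝ)
    (hortho : ∀ i j, v i ⬝ᵥ v j = if i = j then (1 : ℝ) else 0)
    (hpos : ∀ i, 0 < lam i)
    (hdecomp : CSmat A ν Λ S = ∑ i, lam i • Matrix.vecMulVec (v i) (v i))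
    (x : ℕ → Fin d → ℝ)
    (hx : ∀ t : ℕ, x (t + 1) - x 0 ∈
      Submodule.map (Matrix.mulVecLin (HSmat A ν Λ S)⁻¹)
        (Submodule.span ℝ {g | ∃ s ≤ t, g = gradf A ν Λ b (x s)})) :
    ∀ t : ℕ,
      sInf {y : ℝ | ∃ Q : Polynomial ℝ, Q.natDegree ≤ t ∧ Q.eval 0 = 1 ∧
          y = (1 / 2) * ∑ i, (Q.eval (lam i)⁻¹) ^ 2 *
            (v i ⬝ᵥ (msqrt (Hmat A ν Λ)).mulVec (x 0 - xstar A ν Λ b)) ^ 2}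
        ≤ deltaEx A ν Λ b (x t) :=
  stmt4_general A b Λ hΛ ν hν S lam v hortho hpos hdecomp x hx
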